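/- Let (M,0) be a rooted model, Φ a σ-cover of M, and A the Φ-abstraction of M. Then for every rooted frame (F',0) with F' = (W',R') and every relation Z ⊆ W×W', the following are equivalent: (1) Z is a σ-bisimulation between M and some model M' based on F' relating the roots (Z : M,0 ∼_σ M',0); (2) Z is an abstract Φ-bisimulation between A and some abstract Φ-model A' based on F' relating the roots (Z : A,0 ∼_Φ A',0). Furthermore, if such M' and A' exist, then A' is the Φ-abstraction of M' (in particular Φ is a σ-cover of M'). -/
import Mathlib


inductive MForm (α : Type) : Type
  | top : MForm α
  | atom : α → MForm α
  | neg : MForm α → MForm α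
  | and : MForm α → MForm α → MForm α
  | box : MForm α → MForm α
deriving DecidableEq

namespace MForm

def imp {α : Type} (φ ψ : MForm α) : MForm α := neg (and φ (neg ψ))

def dia {α : Type} (φ : MForm α) : MForm α := neg (box (neg φ))

def sig {α : Type} [DecidableEq α] : MForm α → Finset α
  | top => ∅
  | atom p => {p}
  | neg φ => sig φ
  | and φ ψ => sig φ ∪ sig ψ
  | box φ => sig φ

def IsProp {α : Type} : MForm α → Prop
  | top => True
  | atom _ => True
  | neg φ => IsProp φ
  | and φ ψ => IsProp φ ∧ IsProp ψ
  | box _ => False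

def subf {α : Type} [DecidableEq α] : MForm α → Finset (MForm α)
  | top => {top}
  | atom p => {atom p}
  | neg φ => insert (neg φ) (subf φ)
  | and φ ψ => insert (and φ ψ) (subf φ ∪ subf ψ)
  | box φ => insert (box φ) (subf φ)

/-- The dag-size of a formula: the number of its distinct subformulas. -/
def dagSize {α : Type} [DecidableEq α] (φ : MForm α) : ℕ := (subf φ).card

end MForm

def psat {α : Type} (v : α → Prop) : MForm α → Prop
  | .top => True
  | .atom p => v p
  | .neg φ => ¬ psat v φ
  | .and φ ψ => psat v φ ∧ psat v ψ
  | .box _ => True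

/-- Propositional tautology. -/
def PTaut {α : Type} (φ : MForm α) : Prop := ∀ v : α → Prop, psat v φ

def bigAnd {α : Type} : List (MForm α) → MForm α
  | [] => .top
  | φ :: l => .and φ (bigAnd l)

def bigOr {α : Type} (l : List (MForm α)) : MForm α := .neg (bigAnd (l.map .neg))

def boxIter {α : Type} : ℕ → MForm α → MForm α
  | 0, φ => φ
  | n + 1, φ => .box (boxIter n φ)

def diaIter {α : Type} : ℕ → MForm α → MForm α
  | 0, φ => φ
  | n + 1, φ => MForm.dia (diaIter n φ)

/-- `□^{≤n} φ`. -/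
def ble {α : Type} (n : ℕ) (φ : MForm α) : MForm α :=
  bigAnd ((List.range (n + 1)).map (fun k => boxIter k φ))

/-- `◇^{≤n} φ`. -/
def dle {α : Type} (n : ℕ) (φ : MForm α) : MForm α := .neg (ble n (.neg φ))

def substAtoms {α β : Type} (s : α → MForm β) : MForm α → MForm β
  | .top => .top
  | .atom a => s a
  | .neg φ => .neg (substAtoms s φ)
  | .and φ ψ => .and (substAtoms s φ) (substAtoms s ψ)
  | .box φ => .box (substAtoms s φ)

structure Frame where
  W : Type
  ne : Nonempty W
  R : W → W → Prop

structure PFrame extends Frame where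
  pt : W

def sat (F : Frame) (V : F.W → ℕ → Prop) : F.W → MForm ℕ → Prop
  | w, .top => True
  | w, .atom p => V w p
  | w, .neg φ => ¬ sat F V w φ
  | w, .and φ ψ => sat F V w φ ∧ sat F V w ψ
  | w, .box φ => ∀ v, F.R w v → sat F V v φ

def validAt (F : Frame) (w : F.W) (φ : MForm ℕ) : Prop := ∀ V, sat F V w φ

def Log (𝓕 : Set PFrame) : Set (MForm ℕ) := {φ | ∀ P ∈ 𝓕, validAt P.toFrame P.pt φ}

def Rooted (F : Frame) (w : F.W) : Prop := ∀ v, Relation.ReflTransGen F.R w v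

def StrImp (L : Set (MForm ℕ)) (σ : Finset ℕ) (φ χ : MForm ℕ) : Prop :=
  χ.sig ⊆ σ ∧ φ.imp χ ∈ L ∧
    ∀ ψ : MForm ℕ, ψ.sig ⊆ σ → φ.imp ψ ∈ L → χ.imp ψ ∈ L

def UnifInt (L : Set (MForm ℕ)) (σ : Finset ℕ) (φ χ : MForm ℕ) : Prop :=
  χ.sig ⊆ σ ∧ φ.imp χ ∈ L ∧
    ∀ ψ : MForm ℕ, ψ.sig ∩ φ.sig ⊆ σ → φ.imp ψ ∈ L → χ.imp ψ ∈ L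

def CraigInt (L : Set (MForm ℕ)) (φ ψ χ : MForm ℕ) : Prop :=
  φ.imp χ ∈ L ∧ χ.imp ψ ∈ L ∧ χ.sig ⊆ φ.sig ∩ ψ.sig

def HasCIP (L : Set (MForm ℕ)) : Prop :=
  ∀ φ ψ : MForm ℕ, φ.imp ψ ∈ L → ∃ χ, CraigInt L φ ψ χ

def IsBisim (σ : Finset ℕ) (F₁ : Frame) (V₁ : F₁.W → ℕ → Prop)
    (F₂ : Frame) (V₂ : F₂.W → ℕ → Prop) (Z : F₁.W → F₂.W → Prop) : Prop :=
  (∀ w₁ w₂, Z w₁ w₂ → ∀ p ∈ σ, (V₁ w₁ p ↔ V₂ w₂ p)) ∧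
  (∀ w₁ w₂ v₁, Z w₁ w₂ → F₁.R w₁ v₁ → ∃ v₂, F₂.R w₂ v₂ ∧ Z v₁ v₂) ∧
  (∀ w₁ w₂ v₂, Z w₁ w₂ → F₂.R w₂ v₂ → ∃ v₁, F₁.R w₁ v₁ ∧ Z v₁ v₂)

def Bisim (σ : Finset ℕ) (F₁ : Frame) (V₁ : F₁.W → ℕ → Prop) (w₁ : F₁.W)
    (F₂ : Frame) (V₂ : F₂.W → ℕ → Prop) (w₂ : F₂.W) : Prop :=
  ∃ Z, IsBisim σ F₁ V₁ F₂ V₂ Z ∧ Z w₁ w₂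

def IsEME (σ : Finset ℕ) (Φ : Finset (MForm ℕ)) : Prop :=
  (∀ φ ∈ Φ, φ.IsProp ∧ φ.sig ⊆ σ) ∧
  (∀ v : ℕ → Prop, ∃ φ ∈ Φ, psat v φ) ∧
  (∀ φ ∈ Φ, ∀ ψ ∈ Φ, φ ≠ ψ → ∀ v : ℕ → Prop, ¬ (psat v φ ∧ psat v ψ))

def IsCover (σ : Finset ℕ) (Φ : Finset (MForm ℕ)) (F : Frame) (V : F.W → ℕ → Prop) : Prop :=
  ∀ φ ∈ Φ, ∀ w₁ w₂, sat F V w₁ φ → sat F V w₂ φ →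
    ∀ χ : MForm ℕ, χ.IsProp → χ.sig ⊆ σ → (sat F V w₁ χ ↔ sat F V w₂ χ)

noncomputable def coverFml (σ : Finset ℕ) (Φ : Finset (MForm ℕ)) (N : ℕ) : MForm ℕ :=
  bigAnd (Φ.toList.map (fun φ => bigAnd (σ.toList.map (fun p =>
    MForm.imp (dle N (.and φ (.atom p))) (ble N (MForm.imp φ (.atom p)))))))

/-- Abstract Φ-bisimulation between abstract models `(F₁,f₁)` and `(F₂,f₂)`:
(abstract atoms), (forth) and (back). -/
def AbsBisim (F₁ : Frame) (f₁ : F₁.W → MForm ℕ)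
    (F₂ : Frame) (f₂ : F₂.W → MForm ℕ) (Z : F₁.W → F₂.W → Prop) : Prop :=
  (∀ w₁ w₂, Z w₁ w₂ → f₁ w₁ = f₂ w₂) ∧
  (∀ w₁ w₂ v₁, Z w₁ w₂ → F₁.R w₁ v₁ → ∃ v₂, F₂.R w₂ v₂ ∧ Z v₁ v₂) ∧
  (∀ w₁ w₂ v₂, Z w₁ w₂ → F₂.R w₂ v₂ → ∃ v₁, F₁.R w₁ v₁ ∧ Z v₁ v₂)

lemma psat_congr {φ : MForm ℕ} {v₁ v₂ : ℕ → Prop}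
    (h : ∀ p ∈ φ.sig, (v₁ p ↔ v₂ p)) : psat v₁ φ ↔ psat v₂ φ := by
  induction φ with
  | top => simp [psat]
  | atom p => simpa [psat] using h p (by simp [MForm.sig])
  | neg φ ih =>
      simp only [MForm.sig] at h
      simp only [psat]; exact not_congr (ih h)
  | and φ ψ ih₁ ih₂ =>
      simp only [MForm.sig, Finset.mem_union] at h
      simp only [psat]
      exact and_congr (ih₁ fun p hp => h p (Or.inl hp)) (ih₂ fun p hp => h p (Or.inr hp))
  | box φ ih => simp [psat]

lemma sat_prop {F : Frame} {V : F.W → ℕ → Prop} {w : F.W} {φ : MForm ℕ}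
    (h : φ.IsProp) : sat F V w φ ↔ psat (V w) φ := by
  induction φ with
  | top => simp [psat, sat]
  | atom p => simp [psat, sat]
  | neg φ ih => exact not_congr (ih h)
  | and φ ψ ih₁ ih₂ => exact and_congr (ih₁ h.1) (ih₂ h.2)
  | box φ ih => exact absurd h not_false

lemma back_surj {F F' : Frame} {Z : F.W → F'.W → Prop}
    (hback : ∀ w₁ w₂ v₂, Z w₁ w₂ → F'.R w₂ v₂ → ∃ v₁, F.R w₁ v₁ ∧ Z v₁ v₂)
    {r : F.W} {r' : F'.W} (hZ : Z r r') (w' : F'.W)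
    (hreach : Relation.ReflTransGen F'.R r' w') : ∃ w, Z w w' := by
  induction hreach with
  | refl => exact ⟨r, hZ⟩
  | tail _ step ih =>
      obtain ⟨w, hw⟩ := ih
      obtain ⟨v, _, hv⟩ := hback w _ _ hw step
      exact ⟨v, hv⟩

/-- Let `(M,r)` be a rooted model (`M` = `(F,V)`), `Φ` a σ-cover of `M`, and
`f` the Φ-abstraction of `M` (i.e. `f w ∈ Φ` and `M,w ⊨ f w` for all `w`). Then for every
rooted frame `(F',r')` and relation `Z`, `Z` is a σ-bisimulation relating the roots between
`M` and some model on `F'` iff `Z` is an abstract Φ-bisimulation relating the roots between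
`(F,f)` and some abstract Φ-model on `F'`; moreover any such witnesses `V'`, `f'` (for the
same `Z`) are related: `f'` is the Φ-abstraction of `(F',V')`, in particular `Φ` is a
σ-cover of `(F',V')`. -/
theorem stmt4 (σ : Finset ℕ) (Φ : Finset (MForm ℕ)) (hEME : IsEME σ Φ)
    (F : Frame) (V : F.W → ℕ → Prop) (r : F.W) (hroot : Rooted F r)
    (hcov : IsCover σ Φ F V)
    (f : F.W → MForm ℕ) (hfΦ : ∀ w, f w ∈ Φ) (hfabs : ∀ w, sat F V w (f w))
    (F' : Frame) (r' : F'.W) (hroot' : Rooted F' r')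
    (Z : F.W → F'.W → Prop) :
    ((∃ V' : F'.W → ℕ → Prop, IsBisim σ F V F' V' Z ∧ Z r r') ↔
      (∃ f' : F'.W → MForm ℕ, (∀ w, f' w ∈ Φ) ∧ AbsBisim F f F' f' Z ∧ Z r r')) ∧
    (∀ (V' : F'.W → ℕ → Prop) (f' : F'.W → MForm ℕ), (∀ w, f' w ∈ Φ) →
      IsBisim σ F V F' V' Z → AbsBisim F f F' f' Z → Z r r' →
        (∀ w', sat F' V' w' (f' w')) ∧ IsCover σ Φ F' V') := by
  classical
  have huniq : ∀ v : ℕ → Prop, ∀ φ ∈ Φ, ∀ ψ ∈ Φ, psat v φ → psat v ψ → φ = ψ := by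
    intro v φ hφ ψ hψ h1 h2
    by_contra hne
    exact hEME.2.2 φ hφ ψ hψ hne v ⟨h1, h2⟩
  constructor
  · constructor
    · rintro ⟨V', ⟨hat, hforth, hback⟩, hZr⟩
      choose f' hf'Φ hf'sat using fun w' => hEME.2.1 (V' w')
      refine ⟨f', hf'Φ, ⟨?_, hforth, hback⟩, hZr⟩
      intro w₁ w₂ hZ
      have h1 : psat (V w₁) (f w₁) := (sat_prop (hEME.1 _ (hfΦ w₁)).1).mp (hfabs w₁)
      have h2 : psat (V' w₂) (f w₁) := by
        refine (psat_congr ?_).mp h1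
        intro p hp; exact hat w₁ w₂ hZ p ((hEME.1 _ (hfΦ w₁)).2 hp)
      exact huniq (V' w₂) _ (hfΦ w₁) _ (hf'Φ w₂) h2 (hf'sat w₂)
    · rintro ⟨f', hf'Φ, ⟨hat, hforth, hback⟩, hZr⟩
      have hsurj : ∀ w', ∃ w, Z w w' := fun w' => back_surj hback hZr w' (hroot' w')
      choose c hc using hsurj
      refine ⟨fun w' => V (c w'), ⟨?_, hforth, hback⟩, hZr⟩
      intro w₁ w₂ hZ p hp
      have he : f (c w₂) = f w₁ := (hat _ _ (hc w₂)).trans (hat _ _ hZ).symm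
      have hcv := hcov (f w₁) (hfΦ w₁) w₁ (c w₂) (hfabs w₁) (he ▸ hfabs (c w₂))
        (.atom p) trivial (by simpa [MForm.sig, Finset.singleton_subset_iff] using hp)
      simpa [sat] using hcv
  · rintro V' f' hf'Φ ⟨hat, hforth, hback⟩ ⟨haat, -, -⟩ hZr
    have hsurj : ∀ w', ∃ w, Z w w' := fun w' => back_surj hback hZr w' (hroot' w')
    choose c hc using hsurj
    have htrans : ∀ w w', Z w w' → ∀ χ : MForm ℕ, χ.IsProp → χ.sig ⊆ σ →
        (sat F V w χ ↔ sat F' V' w' χ) := by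
      intro w w' hZ χ hχ hσ
      rw [sat_prop hχ, sat_prop hχ]
      exact psat_congr fun p hp => hat w w' hZ p (hσ hp)
    constructor
    · intro w'
      have he : f (c w') = f' w' := haat _ _ (hc w')
      exact (htrans _ _ (hc w') (f' w') (hEME.1 _ (hf'Φ w')).1
        (hEME.1 _ (hf'Φ w')).2).mp (he ▸ hfabs (c w'))
    · intro φ hφ w₁' w₂' h1 h2 χ hχ hσ
      have hp := hEME.1 φ hφ
      have a1 := (htrans _ _ (hc w₁') φ hp.1 hp.2).mpr h1
      have a2 := (htrans _ _ (hc w₂') φ hp.1 hp.2).mpr h2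
      rw [← htrans _ _ (hc w₁') χ hχ hσ, ← htrans _ _ (hc w₂') χ hχ hσ]
      exact hcov φ hφ _ _ a1 a2 χ hχ hσ
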